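/- Let F be a finite set, φ : F^ℕ → ℝ continuous, (β_i) a sequence of positive reals with β_i → +∞, and for each i let μ_i be an equilibrium state for β_iφ. If μ_i → μ in the weak-* topology, then μ is a shift-invariant Borel probability measure and ∫φ dμ = sup{∫φ dν : ν a shift-invariant Borel probability measure on F^ℕ}; that is, every weak-* accumulation point of equilibrium states as β → +∞ is a zero-temperature equilibrium state (a φ-maximizing measure). -/

import Mathlib

/-!
Block entropies on `F^ℕ` are bounded by `log₂ |F|` per symbol (Gibbs), so `0 ≤ h ≤ log₂ |F|`.
Comparing the equilibrium state `μᵢ` with an arbitrary invariant `ν` then gives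
`∫ φ dν ≤ ∫ φ dμᵢ + log₂ |F| / βᵢ`, and the error term vanishes in the limit. The limit `μ` is
an invariant probability measure because the shift is continuous and Borel measures on `F^ℕ`
are determined by the integrals of bounded continuous functions.
-/

open MeasureTheory Filter Topology
open scoped ENNReal Classical

noncomputable section

/-- The shift map `(Tx)(n) = x(n+1)` on `F^ℕ`. -/
def shiftF {F : Type} (x : ℕ → F) : ℕ → F := fun n => x (n + 1)

/-- The metric `d(x,y) = 2^{-min{n : x n ≠ y n}}` for `x ≠ y`, and `d(x,x) = 0`. -/
def distF {F : Type} (x y : ℕ → F) : ℝ :=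
  if x = y then 0 else ((2 : ℝ) ^ sInf {n : ℕ | x n ≠ y n})⁻¹

/-- A subshift: a nonempty, closed, shift-invariant subset of `F^ℕ`. -/
def IsSubshiftF {F : Type} [TopologicalSpace F] (X : Set (ℕ → F)) : Prop :=
  X.Nonempty ∧ IsClosed X ∧ ∀ x ∈ X, shiftF x ∈ X

/-- The potential `φ_X(y) = -d(y, X) = -inf {d(y,x) : x ∈ X}`. -/
def phiF {F : Type} (X : Set (ℕ → F)) (y : ℕ → F) : ℝ := -sInf (distF y '' X)

/-- The cylinder set of points whose first `n` symbols form the word `w`. -/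
def cylinderF {F : Type} {n : ℕ} (w : Fin n → F) : Set (ℕ → F) :=
  {x | ∀ i : Fin n, x i = w i}

/-- The entropy `H_n(μ)` of the `n`-block marginal of `μ` (base-2 logarithm). -/
def HblockF {F : Type} [Fintype F] [MeasurableSpace F] (μ : Measure (ℕ → F)) (n : ℕ) : ℝ :=
  -∑ w : Fin n → F, (μ (cylinderF w)).toReal * Real.logb 2 (μ (cylinderF w)).toReal

/-- The Kolmogorov–Sinai entropy `h(μ) = lim_n H_n(μ)/n`; since the limit exists for
shift-invariant measures, we may define it as a `limsup`. -/
def entropyF {F : Type} [Fintype F] [MeasurableSpace F] (μ : Measure (ℕ → F)) : ℝ :=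
  limsup (fun n : ℕ => HblockF μ n / n) atTop

/-- A shift-invariant Borel probability measure on `F^ℕ`. -/
def IsInvProbF {F : Type} [MeasurableSpace F] (μ : Measure (ℕ → F)) : Prop :=
  IsProbabilityMeasure μ ∧ μ.map shiftF = μ

/-- An equilibrium state for `βφ`: a shift-invariant Borel probability measure maximizing
`ν ↦ β∫φ dν + h(ν)` over all shift-invariant Borel probability measures. -/
def IsEquilibriumF {F : Type} [Fintype F] [MeasurableSpace F]
    (φ : (ℕ → F) → ℝ) (β : ℝ) (μ : Measure (ℕ → F)) : Prop :=
  IsInvProbF μ ∧ ∀ ν : Measure (ℕ → F), IsInvProbF ν →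
    β * ∫ x, φ x ∂ν + entropyF ν ≤ β * ∫ x, φ x ∂μ + entropyF μ

namespace Real

theorem sum_negMulLog_le_log_card {ι : Type*} [Fintype ι] {p : ι → ℝ} (h0 : ∀ i, 0 ≤ p i)
    (h1 : ∑ i, p i = 1) : ∑ i, negMulLog (p i) ≤ log (Fintype.card ι) := by
  have hι : Nonempty ι := by
    by_contra h
    simp [not_nonempty_iff.mp h] at h1
  set N : ℝ := (Fintype.card ι : ℝ)
  have hN : 0 < N := by simp [N, Fintype.card_pos]
  have hw : ∑ _i : ι, N⁻¹ = 1 := by simp [N, Finset.card_univ, hN.ne']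
  have jensen := concaveOn_negMulLog.le_map_sum (t := Finset.univ) (w := fun _ => N⁻¹) (p := p)
    (fun _ _ => by positivity) hw (fun i _ => h0 i)
  have hnegMulLog : negMulLog N⁻¹ = N⁻¹ * log N := by simp [negMulLog, log_inv]
  simp only [smul_eq_mul, ← Finset.mul_sum, h1, mul_one, hnegMulLog] at jensen
  exact le_of_mul_le_mul_left jensen (inv_pos.2 hN)

end Real

theorem cylinderF_eq_preimage {F : Type} {n : ℕ} (w : Fin n → F) :
    cylinderF w = (fun (x : ℕ → F) (i : Fin n) => x i) ⁻¹' {w} := by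
  ext x
  simp [cylinderF, funext_iff]

section BlockEntropy

variable {F : Type} [Fintype F] [MeasurableSpace F] (μ : Measure (ℕ → F))

theorem HblockF_eq_sum_negMulLog (n : ℕ) :
    HblockF μ n = (∑ w : Fin n → F, Real.negMulLog (μ.real (cylinderF w))) / Real.log 2 := by
  simp only [HblockF, Real.logb, Real.negMulLog, measureReal_def, neg_mul, Finset.sum_neg_distrib,
    Finset.sum_div, neg_div, mul_div_assoc]

variable [IsProbabilityMeasure μ]

theorem HblockF_nonneg (n : ℕ) : 0 ≤ HblockF μ n := by
  rw [HblockF_eq_sum_negMulLog]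
  exact div_nonneg (Finset.sum_nonneg fun w _ => Real.negMulLog_nonneg measureReal_nonneg
    measureReal_le_one) (Real.log_nonneg one_le_two)

theorem HblockF_div_nonneg (n : ℕ) : 0 ≤ HblockF μ n / n :=
  div_nonneg (HblockF_nonneg μ n) n.cast_nonneg

variable [MeasurableSingletonClass F]

theorem sum_measureReal_cylinderF (n : ℕ) : ∑ w : Fin n → F, μ.real (cylinderF w) = 1 := by
  have hrestrict : Measurable fun (x : ℕ → F) (i : Fin n) => x i :=
    measurable_pi_lambda _ fun i => measurable_pi_apply _
  simp_rw [cylinderF_eq_preimage]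
  rw [sum_measureReal_preimage_singleton Finset.univ fun w _ =>
    hrestrict (measurableSet_singleton w)]
  simp

theorem HblockF_le (n : ℕ) : HblockF μ n ≤ n * Real.logb 2 (Fintype.card F) := by
  have gibbs := Real.sum_negMulLog_le_log_card (fun w => measureReal_nonneg)
    (sum_measureReal_cylinderF μ n)
  rw [Fintype.card_fun, Fintype.card_fin, Nat.cast_pow, Real.log_pow] at gibbs
  rw [HblockF_eq_sum_negMulLog, Real.logb, ← mul_div_assoc]
  gcongr

theorem eventually_HblockF_div_le :
    ∀ᶠ n : ℕ in atTop, HblockF μ n / n ≤ Real.logb 2 (Fintype.card F) :=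
  (eventually_gt_atTop 0).mono fun n hn =>
    (div_le_iff₀ (Nat.cast_pos.2 hn)).2 <| (HblockF_le μ n).trans_eq (mul_comm _ _)

theorem entropyF_nonneg : 0 ≤ entropyF μ :=
  le_limsup_of_frequently_le (.of_forall (HblockF_div_nonneg μ))
    (isBoundedUnder_of_eventually_le (eventually_HblockF_div_le μ))

theorem entropyF_le_logb_card : entropyF μ ≤ Real.logb 2 (Fintype.card F) :=
  limsup_le_of_le
    (isBoundedUnder_of_eventually_ge (.of_forall (HblockF_div_nonneg μ))).isCoboundedUnder_le
    (eventually_HblockF_div_le μ)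

end BlockEntropy

theorem IsEquilibriumF.integral_le_add_logb_card_div {F : Type} [Fintype F] [MeasurableSpace F]
    [MeasurableSingletonClass F] {φ : (ℕ → F) → ℝ} {β : ℝ} {μ ν : Measure (ℕ → F)}
    (hμ : IsEquilibriumF φ β μ) (hβ : 0 < β) (hν : IsInvProbF ν) :
    ∫ x, φ x ∂ν ≤ ∫ x, φ x ∂μ + Real.logb 2 (Fintype.card F) / β := by
  have := hμ.1.1
  have := hν.1
  have hmax := hμ.2 ν hν
  have hν₀ := entropyF_nonneg ν
  have hμC := entropyF_le_logb_card μ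
  rw [add_div' _ _ _ hβ.ne', le_div_iff₀ hβ]
  linarith

section WeakLimit

variable {X ι : Type*} [TopologicalSpace X] [MeasurableSpace X] {l : Filter ι} [l.NeBot]
  {μs : ι → Measure X} {μ : Measure X}

theorem isProbabilityMeasure_of_tendsto_integral (hμs : ∀ i, IsProbabilityMeasure (μs i))
    (h : ∀ f : C(X, ℝ), Tendsto (fun i => ∫ x, f x ∂μs i) l (𝓝 (∫ x, f x ∂μ))) :
    IsProbabilityMeasure μ := by
  have h1 := h (ContinuousMap.const X 1)
  simp only [ContinuousMap.const_apply, integral_const, smul_eq_mul, mul_one, probReal_univ] at h1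
  exact ⟨(ENNReal.toReal_eq_one_iff _).1 (tendsto_nhds_unique tendsto_const_nhds h1).symm⟩

theorem map_eq_of_tendsto_integral [HasOuterApproxClosed X] [BorelSpace X] {T : X → X}
    (hT : Continuous T) (hμs : ∀ i, IsProbabilityMeasure (μs i)) (hinv : ∀ i, (μs i).map T = μs i)
    (h : ∀ f : C(X, ℝ), Tendsto (fun i => ∫ x, f x ∂μs i) l (𝓝 (∫ x, f x ∂μ))) :
    μ.map T = μ := by
  have := isProbabilityMeasure_of_tendsto_integral hμs h
  refine ext_of_forall_integral_eq_of_IsFiniteMeasure fun f => ?_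
  have hmap : ∀ ν : Measure X, ∫ x, f x ∂ν.map T = ∫ x, f (T x) ∂ν := fun ν =>
    integral_map hT.aemeasurable f.continuous.aestronglyMeasurable
  have hcomp i : ∫ x, f x ∂μs i = ∫ x, f (T x) ∂μs i := by rw [← hmap, hinv]
  exact hmap μ ▸ tendsto_nhds_unique (h (f.toContinuousMap.comp ⟨T, hT⟩))
    ((h f.toContinuousMap).congr hcomp)

end WeakLimit

theorem stmt12_general (F : Type) [Fintype F] [TopologicalSpace F] [DiscreteTopology F]
    [MeasurableSpace F] [DiscreteMeasurableSpace F]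
    (φ : (ℕ → F) → ℝ) (hφ : Continuous φ)
    (β : ℕ → ℝ) (hβ : Tendsto β atTop atTop)
    (μs : ℕ → Measure (ℕ → F)) (hμs : ∀ i, IsEquilibriumF φ (β i) (μs i))
    (μ : Measure (ℕ → F))
    (hconv : ∀ f : C(ℕ → F, ℝ),
      Tendsto (fun i => ∫ x, f x ∂(μs i)) atTop (𝓝 (∫ x, f x ∂μ))) :
    IsInvProbF μ ∧
      ∫ x, φ x ∂μ =
        sSup {r | ∃ ν : Measure (ℕ → F), IsInvProbF ν ∧ r = ∫ x, φ x ∂ν} := by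
  have hprob i : IsProbabilityMeasure (μs i) := (hμs i).1.1
  have hshift : Continuous (shiftF (F := F)) := continuous_pi fun n => continuous_apply (n + 1)
  have hμ : IsInvProbF μ := ⟨isProbabilityMeasure_of_tendsto_integral hprob hconv,
    map_eq_of_tendsto_integral hshift hprob (fun i => (hμs i).1.2) hconv⟩
  refine ⟨hμ, (IsGreatest.csSup_eq ?_).symm⟩
  refine ⟨⟨μ, hμ, rfl⟩, ?_⟩
  rintro _ ⟨ν, hν, rfl⟩
  have hlim : Tendsto (fun i => ∫ x, φ x ∂μs i + Real.logb 2 (Fintype.card F) / β i) atTop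
      (𝓝 (∫ x, φ x ∂μ)) := by
    simpa using (hconv (ContinuousMap.mk φ hφ)).add (tendsto_const_nhds.div_atTop hβ)
  exact ge_of_tendsto hlim <| (hβ.eventually_gt_atTop 0).mono fun i hβi =>
    (hμs i).integral_le_add_logb_card_div hβi hν

/-- Let `φ : F^ℕ → ℝ` be continuous, `β_i → +∞` positive reals, and
`μ_i` an equilibrium state for `β_i φ` for each `i`.  If `μ_i → μ` weak-*, then `μ` is a
shift-invariant Borel probability measure and `∫φ dμ` is maximal among shift-invariant
Borel probability measures; i.e. `μ` is a zero-temperature equilibrium state. -/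
theorem stmt12 (F : Type) [Fintype F] [TopologicalSpace F] [DiscreteTopology F]
    [MeasurableSpace F] [DiscreteMeasurableSpace F]
    (φ : (ℕ → F) → ℝ) (hφ : Continuous φ)
    (β : ℕ → ℝ) (hβpos : ∀ i, 0 < β i) (hβ : Tendsto β atTop atTop)
    (μs : ℕ → Measure (ℕ → F)) (hμs : ∀ i, IsEquilibriumF φ (β i) (μs i))
    (μ : Measure (ℕ → F))
    (hconv : ∀ f : C(ℕ → F, ℝ),
      Tendsto (fun i => ∫ x, f x ∂(μs i)) atTop (𝓝 (∫ x, f x ∂μ))) :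
    IsInvProbF μ ∧
      ∫ x, φ x ∂μ =
        sSup {r | ∃ ν : Measure (ℕ → F), IsInvProbF ν ∧ r = ∫ x, φ x ∂ν} :=
  stmt12_general F φ hφ β hβ μs hμs μ hconv

end
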